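/- arXiv:2312.07041 — 2 statements merged into one kernel-verified Lean document; each statement's English description precedes it below -/
import Mathlib

section
/- Let G > 0 be real, let i ≥ 1 strong branching iterations have revealed positive gains g_1, …, g_i (each iteration uses 2 nodes), and set d_min = min_{j ≤ i} ⌈G/g_j⌉. Then the minimum, over choices of a sampled variable j ≤ i and over full binary trees in which every leaf at depth k satisfies k·g_j ≥ G, of (number of tree nodes) + 2·i equals 2^(d_min + 1) − 1 + 2·i. -/
/-- A full binary tree: every node is either a leaf (zero children)
or has exactly two children. -/
inductive FullBinTree : Type where
  | leaf : FullBinTree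
  | node : FullBinTree → FullBinTree → FullBinTree

/-- The total number of nodes of a full binary tree. -/
def FullBinTree.numNodes : FullBinTree → ℕ
  | .leaf => 1
  | .node l r => l.numNodes + r.numNodes + 1

/-- `FullBinTree.closesGap g G t k` means: in the tree `t` whose root is at depth `k`,
every leaf, say at depth `k'`, satisfies `k' * g ≥ G` (branching on a variable of
symmetric dual gain `g` closes the target gap `G`). -/
def FullBinTree.closesGap (g G : ℝ) : FullBinTree → ℕ → Prop
  | .leaf, k => G ≤ (k : ℝ) * g
  | .node l r, k => l.closesGap g G (k + 1) ∧ r.closesGap g G (k + 1)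

/-- The perfect binary tree of depth `n`. -/
def perfectTree : ℕ → FullBinTree
  | 0 => .leaf
  | n + 1 => .node (perfectTree n) (perfectTree n)

lemma perfectTree_numNodes (n : ℕ) : (perfectTree n).numNodes = 2 ^ (n + 1) - 1 := by
  induction n with
  | zero => rfl
  | succ n ih =>
    simp only [perfectTree, FullBinTree.numNodes, ih]
    have : 1 ≤ 2 ^ (n + 1) := Nat.one_le_two_pow
    omega

lemma perfectTree_closesGap (g G : ℝ) (n k : ℕ) (h : G ≤ ((k + n : ℕ) : ℝ) * g) :
    (perfectTree n).closesGap g G k := by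
  induction n generalizing k with
  | zero => simpa [perfectTree, FullBinTree.closesGap] using h
  | succ n ih =>
    refine ⟨ih (k + 1) ?_, ih (k + 1) ?_⟩ <;>
      · convert h using 3
        omega

lemma numNodes_pos (t : FullBinTree) : 1 ≤ t.numNodes := by
  cases t <;> simp [FullBinTree.numNodes]

lemma lower_bound (g G : ℝ) (hg : 0 < g) (hG : 0 < G) (t : FullBinTree) :
    ∀ k : ℕ, t.closesGap g G k → 2 ^ (⌈G / g⌉₊ - k + 1) - 1 ≤ t.numNodes := by
  induction t with
  | leaf =>
    intro k h
    have hle : G / g ≤ (k : ℝ) := (div_le_iff₀ hg).mpr h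
    have : ⌈G / g⌉₊ ≤ k := Nat.ceil_le.mpr hle
    have : ⌈G / g⌉₊ - k = 0 := by omega
    simp [this, FullBinTree.numNodes]
  | node l r ihl ihr =>
    intro k h
    obtain ⟨hl, hr⟩ := h
    have Hl := ihl (k + 1) hl
    have Hr := ihr (k + 1) hr
    simp only [FullBinTree.numNodes]
    rcases Nat.eq_zero_or_pos (⌈G / g⌉₊ - k) with h0 | hpos
    · have := numNodes_pos l
      have := numNodes_pos r
      rw [h0, pow_one]
      omega
    · have hk : ⌈G / g⌉₊ - (k + 1) + 1 = ⌈G / g⌉₊ - k := by omega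
      rw [hk] at Hl Hr
      have h1 : 1 ≤ 2 ^ (⌈G / g⌉₊ - k) := Nat.one_le_two_pow
      have : 2 ^ (⌈G / g⌉₊ - k + 1) = 2 * 2 ^ (⌈G / g⌉₊ - k) := by ring
      omega

/-- After `i ≥ 1` strong branching iterations revealing positive gains `gain j`
(each iteration costing 2 nodes), with `d_min = min_j ⌈G / gain j⌉`, the minimum over
choices of a sampled variable `j` and over full binary trees closing the gap `G` with
variable `j` of the total number of nodes used equals `2 ^ (d_min + 1) - 1 + 2 * i`. -/
theorem isLeast_nodes_used_strong_branching (G : ℝ) (hG : 0 < G) (i : ℕ) (hi : 1 ≤ i)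
    (gain : Fin i → ℝ) (hgain : ∀ j, 0 < gain j) :
    IsLeast
      {N : ℕ | ∃ (j : Fin i) (t : FullBinTree),
        t.closesGap (gain j) G 0 ∧ N = t.numNodes + 2 * i}
      (2 ^ ((⨅ j : Fin i, ⌈G / gain j⌉₊) + 1) - 1 + 2 * i) := by
  have hne : Nonempty (Fin i) := ⟨⟨0, hi⟩⟩
  obtain ⟨j0, hj0⟩ := Finite.exists_min (fun j : Fin i => ⌈G / gain j⌉₊)
  have hinf : (⨅ j : Fin i, ⌈G / gain j⌉₊) = ⌈G / gain j0⌉₊ := by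
    apply le_antisymm
    · exact ciInf_le (OrderBot.bddBelow _) j0
    · exact le_ciInf hj0
  constructor
  · refine ⟨j0, perfectTree ⌈G / gain j0⌉₊, ?_, ?_⟩
    · apply perfectTree_closesGap
      have := Nat.le_ceil (G / gain j0)
      rw [div_le_iff₀ (hgain j0)] at this
      simpa using this
    · rw [perfectTree_numNodes, hinf]
  · rintro N ⟨j, t, hclose, rfl⟩
    have hlb := lower_bound (gain j) G (hgain j) hG t 0 hclose
    simp only [Nat.sub_zero] at hlb
    have hmin : (⨅ j : Fin i, ⌈G / gain j⌉₊) ≤ ⌈G / gain j⌉₊ :=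
      ciInf_le (OrderBot.bddBelow _) j
    have hpow : 2 ^ ((⨅ j : Fin i, ⌈G / gain j⌉₊) + 1) ≤ 2 ^ (⌈G / gain j⌉₊ + 1) :=
      Nat.pow_le_pow_right (by norm_num) (by omega)
    omega
end

section
/- Let X_1, …, X_i (i ≥ 1) be independent and identically distributed real-valued random variables with continuous cumulative distribution function F, let G > 0 be real, and let m ≥ 1 be an integer such that P(X_1 ≥ G/m) = 1. Let D = ⌈G / max_{1 ≤ j ≤ i} X_j⌉. Then E[2^(D+1) − 1] = 3·(1 − F(G)^i) + Σ_{d=2}^{m} (2^(d+1) − 1)·(F(G/(d−1))^i − F(G/d)^i). -/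
open MeasureTheory ProbabilityTheory

/-- If `X 0, …, X (i-1)` (`i ≥ 1`) are i.i.d. real random variables with continuous
common cumulative distribution function `F`, `G > 0`, and `m ≥ 1` satisfies
`P(X 0 ≥ G / m) = 1`, then with `D = ⌈G / max_j X j⌉`, the expected final tree size is
`E[2 ^ (D + 1) - 1] = 3 * (1 - F G ^ i)
  + ∑_{d=2}^{m} (2 ^ (d + 1) - 1) * (F (G / (d - 1)) ^ i - F (G / d) ^ i)`. -/
theorem expected_tree_size_after_iterations {Ω : Type*} [MeasurableSpace Ω]
    (P : Measure Ω) [IsProbabilityMeasure P] (i : ℕ) (hi : 1 ≤ i)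
    (X : Fin i → Ω → ℝ) (hX : ∀ j, Measurable (X j))
    (hindep : iIndepFun X P)
    (hident : ∀ j k, IdentDistrib (X j) (X k) P P)
    (F : ℝ → ℝ) (hF : ∀ j t, F t = (P {ω | X j ω ≤ t}).toReal) (hFcont : Continuous F)
    (G : ℝ) (hG : 0 < G) (m : ℕ) (hm : 1 ≤ m)
    (hbound : P {ω | G / m ≤ X ⟨0, hi⟩ ω} = 1) :
    ∫ ω, ((2 : ℝ) ^ (⌈G / (⨆ j, X j ω)⌉₊ + 1) - 1) ∂P
      = 3 * (1 - F G ^ i)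
        + ∑ d ∈ Finset.Icc 2 m,
            ((2 : ℝ) ^ (d + 1) - 1) * (F (G / ((d : ℝ) - 1)) ^ i - F (G / d) ^ i) := by
  classical
  have hι : Nonempty (Fin i) := ⟨⟨0, hi⟩⟩
  set M : Ω → ℝ := fun ω => ⨆ j, X j ω with hMdef
  have hMmeas : Measurable M := Measurable.iSup hX
  have hF0 : ∀ t, 0 ≤ F t := fun t => (hF ⟨0, hi⟩ t) ▸ ENNReal.toReal_nonneg
  have hPle : ∀ j t, P {ω | X j ω ≤ t} = ENNReal.ofReal (F t) := by
    intro j t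
    rw [hF j t, ENNReal.ofReal_toReal (measure_ne_top P _)]
  -- continuity of F gives the same value for strict inequalities
  have hPlt : ∀ j t, P {ω | X j ω < t} = ENNReal.ofReal (F t) := by
    intro j t
    have hset : {ω | X j ω < t} = ⋃ n : ℕ, {ω | X j ω ≤ t - 1 / (n + 1)} := by
      ext ω
      simp only [Set.mem_setOf_eq, Set.mem_iUnion]
      constructor
      · intro h
        obtain ⟨n, hn⟩ := exists_nat_one_div_lt (sub_pos.2 h)
        exact ⟨n, by linarith⟩
      · rintro ⟨n, hn⟩
        have h1 : (0 : ℝ) < 1 / ((n : ℝ) + 1) := by positivity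
        linarith
    have hmono : Monotone (fun n : ℕ => {ω | X j ω ≤ t - 1 / ((n : ℝ) + 1)}) := by
      intro a b hab ω hω
      simp only [Set.mem_setOf_eq] at *
      have hcast : ((a : ℝ) + 1) ≤ (b : ℝ) + 1 := by
        have : (a : ℝ) ≤ b := Nat.cast_le.2 hab
        linarith
      have : (1 : ℝ) / ((b : ℝ) + 1) ≤ 1 / ((a : ℝ) + 1) :=
        one_div_le_one_div_of_le (by positivity) hcast
      linarith
    have h1 : Filter.Tendsto (fun n : ℕ => P {ω | X j ω ≤ t - 1 / ((n : ℝ) + 1)})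
        Filter.atTop (nhds (P {ω | X j ω < t})) := by
      rw [hset]
      exact tendsto_measure_iUnion_atTop hmono
    have htend : Filter.Tendsto (fun n : ℕ => t - 1 / ((n : ℝ) + 1))
        Filter.atTop (nhds t) := by
      have := (tendsto_const_nhds (x := t) (f := Filter.atTop (α := ℕ))).sub
        tendsto_one_div_add_atTop_nhds_zero_nat
      simpa using this
    have h2 : Filter.Tendsto (fun n : ℕ => P {ω | X j ω ≤ t - 1 / ((n : ℝ) + 1)})
        Filter.atTop (nhds (ENNReal.ofReal (F t))) := by
      simp only [hPle]
      exact (ENNReal.continuous_ofReal.tendsto _).comp ((hFcont.tendsto t).comp htend)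
    exact tendsto_nhds_unique h1 h2
  -- the CDF of the maximum
  have hMlt : ∀ t, P {ω | M ω < t} = ENNReal.ofReal (F t) ^ i := by
    intro t
    have hset : {ω | M ω < t} = ⋂ j, {ω | X j ω < t} := by
      ext ω
      simp only [Set.mem_setOf_eq, Set.mem_iInter]
      constructor
      · intro h j
        exact lt_of_le_of_lt
          (le_ciSup (Set.finite_range fun k => X k ω).bddAbove j) h
      · intro h
        obtain ⟨j0, hj0⟩ := Finite.exists_max (fun j => X j ω)
        exact lt_of_le_of_lt (ciSup_le hj0) (h j0)
    have hset' : {ω | M ω < t} = ⋂ j, X j ⁻¹' Set.Iio t := hset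
    rw [hset', hindep.meas_iInter (fun j => ⟨Set.Iio t, measurableSet_Iio, rfl⟩)]
    have hval : ∀ j : Fin i, P (X j ⁻¹' Set.Iio t) = ENNReal.ofReal (F t) :=
      fun j => hPlt j t
    simp only [hval, Finset.prod_const, Finset.card_univ, Fintype.card_fin]
  have hMltReal : ∀ t, (P {ω | M ω < t}).toReal = F t ^ i := by
    intro t
    rw [hMlt, ENNReal.toReal_pow, ENNReal.toReal_ofReal (hF0 t)]
  have hMltMeas : ∀ t : ℝ, MeasurableSet {ω | M ω < t} := fun t =>
    hMmeas measurableSet_Iio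
  -- the almost sure lower bound
  have hm' : (0 : ℝ) < m := by exact_mod_cast hm
  have hGm : 0 < G / m := div_pos hG hm'
  have hA : ∀ᵐ ω ∂P, ∀ j, G / m ≤ X j ω := by
    rw [MeasureTheory.ae_all_iff]
    intro j
    have hAj : P {ω | G / m ≤ X j ω} = 1 := by
      have h := (hident j ⟨0, hi⟩).measure_mem_eq
        (s := Set.Ici (G / (m : ℝ))) measurableSet_Ici
      exact h.trans hbound
    have hmeas : MeasurableSet {ω | G / m ≤ X j ω} := hX j measurableSet_Ici
    have hc : P {ω | G / m ≤ X j ω}ᶜ = 0 := by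
      rw [prob_compl_eq_one_sub hmeas, hAj, tsub_self]
    rw [MeasureTheory.ae_iff]
    exact hc
  -- pointwise facts on the good event
  have hMfacts : ∀ ω, (∀ j, G / m ≤ X j ω) → 0 < M ω ∧ G / m ≤ M ω := by
    intro ω hω
    have hle : G / m ≤ M ω :=
      le_trans (hω ⟨0, hi⟩)
        (le_ciSup (Set.finite_range fun k => X k ω).bddAbove ⟨0, hi⟩)
    exact ⟨lt_of_lt_of_le hGm hle, hle⟩
  set E : ℕ → Set Ω := fun d => {ω | ⌈G / M ω⌉₊ = d} with hEdef
  have hEmeas : ∀ d, MeasurableSet (E d) := by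
    intro d
    exact (Nat.measurable_ceil.comp (measurable_const.div hMmeas))
      (measurableSet_singleton d)
  -- almost-everywhere rewriting of the integrand
  have haeeq : (fun ω => ((2 : ℝ) ^ (⌈G / M ω⌉₊ + 1) - 1))
      =ᵐ[P] fun ω => ∑ d ∈ Finset.Icc 1 m,
        Set.indicator (E d) (fun _ => ((2 : ℝ) ^ (d + 1) - 1)) ω := by
    filter_upwards [hA] with ω hω
    obtain ⟨hMpos, hMge⟩ := hMfacts ω hω
    have hD1 : 1 ≤ ⌈G / M ω⌉₊ := Nat.ceil_pos.2 (div_pos hG hMpos)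
    have hDm : ⌈G / M ω⌉₊ ≤ m := by
      rw [Nat.ceil_le]
      rw [div_le_iff₀ hMpos]
      calc G = (G / m) * m := by field_simp
        _ ≤ M ω * m := by exact mul_le_mul_of_nonneg_right hMge hm'.le
        _ = (m : ℝ) * M ω := mul_comm _ _
    rw [Finset.sum_eq_single_of_mem (⌈G / M ω⌉₊) (Finset.mem_Icc.2 ⟨hD1, hDm⟩)]
    · rw [Set.indicator_of_mem (by exact rfl)]
    · intro d _ hd
      exact Set.indicator_of_notMem (fun h => hd (by rw [← h])) _
  -- integrate the simple function
  have hint : ∫ ω, ((2 : ℝ) ^ (⌈G / M ω⌉₊ + 1) - 1) ∂P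
      = ∑ d ∈ Finset.Icc 1 m, (P (E d)).toReal * ((2 : ℝ) ^ (d + 1) - 1) := by
    rw [integral_congr_ae haeeq]
    rw [integral_finset_sum _ (fun d _ => by
      exact (integrable_const _).indicator (hEmeas d))]
    refine Finset.sum_congr rfl fun d _ => ?_
    rw [integral_indicator_const _ (hEmeas d), smul_eq_mul, measureReal_def]
  -- measure of E 1
  have hE1 : (P (E 1)).toReal = 1 - F G ^ i := by
    have hcongr : (E 1 : Set Ω) =ᵐ[P] ({ω | M ω < G}ᶜ : Set Ω) := by
      rw [Filter.eventuallyEq_set]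
      filter_upwards [hA] with ω hω
      obtain ⟨hMpos, _⟩ := hMfacts ω hω
      simp only [hEdef, Set.mem_setOf_eq]
      rw [Set.mem_compl_iff, Set.mem_setOf_eq, not_lt, Nat.ceil_eq_iff one_ne_zero]
      simp only [Nat.sub_self, Nat.cast_zero, Nat.cast_one]
      constructor
      · rintro ⟨-, h2⟩
        exact (div_le_one hMpos).1 h2
      · intro h
        exact ⟨div_pos hG hMpos, (div_le_one hMpos).2 h⟩
    rw [measure_congr hcongr, prob_compl_eq_one_sub (hMltMeas G), hMlt,
      ENNReal.toReal_sub_of_le (by rw [← hMlt]; exact prob_le_one) ENNReal.one_ne_top,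
      ENNReal.toReal_one, ENNReal.toReal_pow, ENNReal.toReal_ofReal (hF0 G)]
  -- measure of E d for 2 ≤ d ≤ m
  have hEd : ∀ d, 2 ≤ d → (P (E d)).toReal
      = F (G / ((d : ℝ) - 1)) ^ i - F (G / d) ^ i := by
    intro d hd2
    have hd0 : (0 : ℝ) < d := by
      have : (2 : ℝ) ≤ d := by exact_mod_cast hd2
      linarith
    have hd1 : (0 : ℝ) < (d : ℝ) - 1 := by
      have : (2 : ℝ) ≤ d := by exact_mod_cast hd2
      linarith
    have hcongr : (E d : Set Ω) =ᵐ[P] ({ω | M ω < G / ((d : ℝ) - 1)} \ {ω | M ω < G / d} : Set Ω) := by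
      rw [Filter.eventuallyEq_set]
      filter_upwards [hA] with ω hω
      obtain ⟨hMpos, _⟩ := hMfacts ω hω
      simp only [hEdef, Set.mem_setOf_eq]
      rw [Set.mem_diff, Set.mem_setOf_eq, Set.mem_setOf_eq, not_lt,
        Nat.ceil_eq_iff (by omega : d ≠ 0)]
      have hcast : ((d - 1 : ℕ) : ℝ) = (d : ℝ) - 1 := by
        have : 1 ≤ d := by omega
        push_cast [Nat.cast_sub this]
        ring
      rw [hcast]
      constructor
      · rintro ⟨h1, h2⟩
        constructor
        · rw [lt_div_iff₀ hd1]
          rw [lt_div_iff₀ hMpos] at h1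
          linarith [h1]
        · rw [div_le_iff₀ hd0]
          rw [div_le_iff₀ hMpos] at h2
          linarith [h2]
      · rintro ⟨h1, h2⟩
        constructor
        · rw [lt_div_iff₀ hMpos]
          rw [lt_div_iff₀ hd1] at h1
          linarith [h1]
        · rw [div_le_iff₀ hMpos]
          rw [div_le_iff₀ hd0] at h2
          linarith [h2]
    have hsub : {ω | M ω < G / d} ⊆ {ω | M ω < G / ((d : ℝ) - 1)} := by
      intro ω hω
      have : G / d ≤ G / ((d : ℝ) - 1) :=
        div_le_div_of_nonneg_left hG.le hd1 (by linarith)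
      exact lt_of_lt_of_le hω this
    rw [measure_congr hcongr,
      measure_diff hsub (hMltMeas (G / d)).nullMeasurableSet (measure_ne_top P _),
      ENNReal.toReal_sub_of_le (measure_mono hsub) (measure_ne_top P _),
      hMltReal, hMltReal]
  -- put everything together
  have hsplit : Finset.Icc 1 m = insert 1 (Finset.Icc 2 m) := by
    ext d
    simp only [Finset.mem_Icc, Finset.mem_insert]
    omega
  calc ∫ ω, ((2 : ℝ) ^ (⌈G / (⨆ j, X j ω)⌉₊ + 1) - 1) ∂P
      = ∑ d ∈ Finset.Icc 1 m, (P (E d)).toReal * ((2 : ℝ) ^ (d + 1) - 1) := hint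
    _ = (P (E 1)).toReal * ((2 : ℝ) ^ (1 + 1) - 1)
        + ∑ d ∈ Finset.Icc 2 m, (P (E d)).toReal * ((2 : ℝ) ^ (d + 1) - 1) := by
        rw [hsplit, Finset.sum_insert (by simp)]
    _ = 3 * (1 - F G ^ i)
        + ∑ d ∈ Finset.Icc 2 m,
            ((2 : ℝ) ^ (d + 1) - 1) * (F (G / ((d : ℝ) - 1)) ^ i - F (G / d) ^ i) := by
        rw [hE1]
        congr 1
        · ring
        · refine Finset.sum_congr rfl fun d hd => ?_
          rw [hEd d (Finset.mem_Icc.1 hd).1, mul_comm]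
end
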